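/- Let σ : ℝ → ℝ be the GeLU function σ(x) = x·Φ(x), where Φ is the standard normal cumulative distribution function. For every M > 0 and every λ > 2M, define o(a,b) = (√(2π)·λ²/8)·(σ((a+b)/λ) + σ((-a-b)/λ) − σ((a−b)/λ) − σ((−a+b)/λ)). Then for all a, b ∈ [-M, M], one has |o(a,b) − a·b| ≤ 100·M³/λ. -/

import Mathlib

/-- The standard normal cumulative distribution function
`Φ(x) = (1/√(2π)) ∫_{-∞}^x e^{-t²/2} dt`. -/
noncomputable def stdNormalCDF (x : ℝ) : ℝ :=
  (1 / Real.sqrt (2 * Real.pi)) * ∫ t in Set.Iic x, Real.exp (-(t ^ 2) / 2)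

/-- The GeLU activation function `σ(x) = x·Φ(x)`. -/
noncomputable def gelu (x : ℝ) : ℝ := x * stdNormalCDF x

/-- The rescaled symmetrized GeLU combination
`o(a,b) = (√(2π)·λ²/8)·(σ((a+b)/λ) + σ((-a-b)/λ) − σ((a−b)/λ) − σ((−a+b)/λ))`. -/
noncomputable def geluProd (lam a b : ℝ) : ℝ :=
  Real.sqrt (2 * Real.pi) * lam ^ 2 / 8 *
    (gelu ((a + b) / lam) + gelu ((-a - b) / lam) - gelu ((a - b) / lam)
      - gelu ((-a + b) / lam))

/-!
Symmetrizing GeLU gives `σ(x) + σ(-x) = x (Φ(x) - Φ(-x)) = √(2/π) · x ∫₀ˣ e^{-t²/2} dt`, and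
`o(a,b)` is, up to the factor `λ²/4`, the difference of `x ∫₀ˣ e^{-t²/2} dt` at `x = (a+b)/λ` and
`x = (a-b)/λ`. Since `|e^{-t²/2} - 1| ≤ t²/2`, that function is `x² + O(x⁴)`, and
`λ²/4 · (((a+b)/λ)² - ((a-b)/λ)²) = ab` exactly; the remaining `O(λ² (M/λ)⁴)` is at most
`2M³/λ` once `M/λ < 1/2`.
-/

open Real MeasureTheory intervalIntegral

lemma integral_neg_self_eq_two_mul_of_even {f : ℝ → ℝ} (hf : Continuous f)
    (heven : ∀ t, f (-t) = f t) (x : ℝ) :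
    ∫ t in -x..x, f t = 2 * ∫ t in (0 : ℝ)..x, f t := by
  have hleft : ∫ t in -x..0, f t = ∫ t in (0 : ℝ)..x, f t := by
    simpa [heven] using (integral_comp_neg (a := 0) (b := x) f).symm
  rw [← integral_add_adjacent_intervals (b := 0) (hf.intervalIntegrable _ _)
    (hf.intervalIntegrable _ _), hleft, two_mul]

lemma integrable_exp_neg_sq_div_two : Integrable fun t : ℝ => exp (-(t ^ 2) / 2) := by
  convert integrable_exp_neg_mul_sq (b := (1 / 2 : ℝ)) (by norm_num) using 2 with t
  ring_nf

lemma stdNormalCDF_sub_stdNormalCDF_neg (x : ℝ) :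
    stdNormalCDF x - stdNormalCDF (-x)
      = 2 / √(2 * π) * ∫ t in (0 : ℝ)..x, exp (-(t ^ 2) / 2) := by
  have hint (y : ℝ) : IntegrableOn (fun t => exp (-(t ^ 2) / 2)) (Set.Iic y) :=
    integrable_exp_neg_sq_div_two.integrableOn
  rw [stdNormalCDF, stdNormalCDF, ← mul_sub, integral_Iic_sub_Iic (hint _) (hint _),
    integral_neg_self_eq_two_mul_of_even (by fun_prop) (by simp)]
  ring

lemma gelu_add_gelu_neg (x : ℝ) :
    gelu x + gelu (-x) = 2 / √(2 * π) * (x * ∫ t in (0 : ℝ)..x, exp (-(t ^ 2) / 2)) := by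
  rw [gelu, gelu, ← mul_left_comm, ← stdNormalCDF_sub_stdNormalCDF_neg]
  ring

lemma abs_integral_exp_neg_sq_div_two_sub_le (x : ℝ) :
    |(∫ t in (0 : ℝ)..x, exp (-(t ^ 2) / 2)) - x| ≤ x ^ 2 / 2 * |x| := by
  have hsub : (∫ t in (0 : ℝ)..x, exp (-(t ^ 2) / 2)) - x
      = ∫ t in (0 : ℝ)..x, (exp (-(t ^ 2) / 2) - 1) := by
    rw [intervalIntegral.integral_sub
      ((by fun_prop : Continuous fun t : ℝ => exp (-(t ^ 2) / 2)).intervalIntegrable _ _)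
      intervalIntegrable_const]
    simp
  rw [hsub, ← norm_eq_abs]
  calc ‖∫ t in (0 : ℝ)..x, (exp (-(t ^ 2) / 2) - 1)‖ ≤ x ^ 2 / 2 * |x - 0| := by
        refine norm_integral_le_of_norm_le_const fun t ht => ?_
        have ht2 : t ^ 2 ≤ x ^ 2 := by
          rcases Set.mem_uIoc.mp ht with h | h <;> nlinarith [h.1, h.2]
        have hexp_le : exp (-(t ^ 2) / 2) ≤ 1 := exp_le_one_iff.mpr (by nlinarith [sq_nonneg t])
        rw [norm_eq_abs, abs_of_nonpos (by linarith)]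
        nlinarith [add_one_le_exp (-(t ^ 2) / 2)]
    _ = x ^ 2 / 2 * |x| := by rw [sub_zero]

lemma abs_mul_integral_exp_neg_sq_div_two_sub_sq_le (x : ℝ) :
    |x * (∫ t in (0 : ℝ)..x, exp (-(t ^ 2) / 2)) - x ^ 2| ≤ x ^ 4 / 2 := by
  calc |x * (∫ t in (0 : ℝ)..x, exp (-(t ^ 2) / 2)) - x ^ 2|
      = |x| * |(∫ t in (0 : ℝ)..x, exp (-(t ^ 2) / 2)) - x| := by rw [← abs_mul, mul_sub, sq]
    _ ≤ |x| * (x ^ 2 / 2 * |x|) := by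
      gcongr; exact abs_integral_exp_neg_sq_div_two_sub_le x
    _ = x ^ 4 / 2 := by rw [← (Even.pow_abs ⟨2, rfl⟩ x), ← sq_abs x]; ring

lemma geluProd_eq (lam a b : ℝ) :
    geluProd lam a b = lam ^ 2 / 4 *
      ((a + b) / lam * (∫ t in (0 : ℝ)..(a + b) / lam, exp (-(t ^ 2) / 2))
        - (a - b) / lam * ∫ t in (0 : ℝ)..(a - b) / lam, exp (-(t ^ 2) / 2)) := by
  have hsqrt : √(2 * π) ≠ 0 := by positivity
  have h₁ := gelu_add_gelu_neg ((a + b) / lam)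
  have h₂ := gelu_add_gelu_neg ((a - b) / lam)
  rw [geluProd, show (-a - b) / lam = -((a + b) / lam) by ring,
    show (-a + b) / lam = -((a - b) / lam) by ring]
  rw [sub_sub, h₁, h₂]
  field_simp
  ring

lemma abs_geluProd_sub_mul_le {lam : ℝ} (hlam : lam ≠ 0) (a b : ℝ) :
    |geluProd lam a b - a * b| ≤ ((a + b) ^ 4 + (a - b) ^ 4) / (8 * lam ^ 2) := by
  set u := (a + b) / lam
  set v := (a - b) / lam
  have hab : a * b = lam ^ 2 / 4 * (u ^ 2 - v ^ 2) := by
    simp only [u, v]; field_simp; ring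
  have hu := abs_mul_integral_exp_neg_sq_div_two_sub_sq_le u
  have hv := abs_mul_integral_exp_neg_sq_div_two_sub_sq_le v
  rw [geluProd_eq, hab, ← mul_sub, abs_mul, abs_of_nonneg (by positivity)]
  calc lam ^ 2 / 4 * |u * (∫ t in (0 : ℝ)..u, exp (-(t ^ 2) / 2))
        - v * (∫ t in (0 : ℝ)..v, exp (-(t ^ 2) / 2)) - (u ^ 2 - v ^ 2)|
      ≤ lam ^ 2 / 4 * (u ^ 4 / 2 + v ^ 4 / 2) := by
        rw [sub_sub_sub_comm]
        gcongr
        exact (abs_sub _ _).trans (add_le_add hu hv)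
    _ = ((a + b) ^ 4 + (a - b) ^ 4) / (8 * lam ^ 2) := by
        simp only [u, v]; field_simp; ring

theorem geluProd_approx_mul_general (M lam : ℝ) (hlam : 2 * M < lam)
    (a b : ℝ) (ha : a ∈ Set.Icc (-M) M) (hb : b ∈ Set.Icc (-M) M) :
    |geluProd lam a b - a * b| ≤ 100 * M ^ 3 / lam := by
  have hM : 0 ≤ M := by linarith [ha.1, ha.2]
  have hlam0 : 0 < lam := by linarith
  have hsum : |a + b| ≤ 2 * M := by linarith [abs_add_le a b, abs_le.mpr ha, abs_le.mpr hb]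
  have hdiff : |a - b| ≤ 2 * M := by linarith [abs_sub a b, abs_le.mpr ha, abs_le.mpr hb]
  have hpow : ∀ x : ℝ, |x| ≤ 2 * M → x ^ 4 ≤ 16 * M ^ 4 := fun x hx => by
    rw [← Even.pow_abs ⟨2, rfl⟩ x]
    exact (pow_le_pow_left₀ (abs_nonneg x) hx 4).trans_eq (by ring)
  calc |geluProd lam a b - a * b| ≤ ((a + b) ^ 4 + (a - b) ^ 4) / (8 * lam ^ 2) :=
        abs_geluProd_sub_mul_le hlam0.ne' a b
    _ ≤ 32 * M ^ 4 / (8 * lam ^ 2) := by gcongr; linarith [hpow _ hsum, hpow _ hdiff]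
    _ = 4 * M / lam * (M ^ 3 / lam) := by field_simp; ring
    _ ≤ 100 * (M ^ 3 / lam) := by
        gcongr
        rw [div_le_iff₀ hlam0]
        linarith
    _ = 100 * M ^ 3 / lam := by ring

/-- For `M > 0`, `λ > 2M`, and `a, b ∈ [-M, M]`, we have `|o(a,b) − ab| ≤ 100·M³/λ`. -/
theorem geluProd_approx_mul (M lam : ℝ) (hM : 0 < M) (hlam : 2 * M < lam)
    (a b : ℝ) (ha : a ∈ Set.Icc (-M) M) (hb : b ∈ Set.Icc (-M) M) :
    |geluProd lam a b - a * b| ≤ 100 * M ^ 3 / lam :=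
  geluProd_approx_mul_general M lam hlam a b ha hb
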